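/- arXiv:2011.11173 — 2 statements merged into one kernel-verified Lean document; each statement's English description precedes it below -/
import Mathlib

section
/- (Calmness of full minimization) Let μ, ν be Borel probability measures on Z and W ≥ 0 a constant such that |∫ g dμ − ∫ g dν| ≤ W for every 1-Lipschitz g : Z → ℝ. Suppose f_μ is α-strongly convex for some α > 0, let y_μ be a minimizer over E of y ↦ f_μ(y) + r(y), and let y_ν be a minimizer over E of y ↦ f_ν(y) + r(y). Then ‖y_μ − y_ν‖ ≤ (β/α)·W. -/
/-!
Adding the first-order optimality conditions of `yμ` and `yν` (the convex `r` cancels) to the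
`α`-strong monotonicity of `∇f_μ` gives
`α ‖yμ - yν‖² ≤ ⟪∇f_μ yν - ∇f_ν yν, yν - yμ⟫`, so the distance is controlled by the
perturbation of the gradient at the single point `yν`. Testing the dual bound on the
`β ‖w‖`-Lipschitz function `z ↦ ⟪w, ∇ℓ(yν, z)⟫`, with `w` that perturbation, gives `‖w‖ ≤ β W`.
-/

open MeasureTheory Set
open scoped NNReal RealInnerProductSpace

section LineDeriv

variable {E : Type*} [NormedAddCommGroup E] [NormedSpace ℝ E] {f g : E → ℝ} {f' g' : ℝ} {x v : E}

lemma HasLineDerivAt.neg (hf : HasLineDerivAt ℝ f f' x v) : HasLineDerivAt ℝ (-f) (-f') x v :=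
  HasDerivAt.neg (f := fun t : ℝ => f (x + t • v)) hf

lemma HasLineDerivAt.sub (hf : HasLineDerivAt ℝ f f' x v) (hg : HasLineDerivAt ℝ g g' x v) :
    HasLineDerivAt ℝ (f - g) (f' - g') x v :=
  HasDerivAt.sub (f := fun t : ℝ => f (x + t • v)) (g := fun t : ℝ => g (x + t • v)) hf hg

lemma HasLineDerivAt.le_of_forall_add_mul_le {c : ℝ} (hf : HasLineDerivAt ℝ f f' x v)
    (h : ∀ t ∈ Ioo (0 : ℝ) 1, f x + t * c ≤ f (x + t • v)) : c ≤ f' := by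
  refine ge_of_tendsto hf.tendsto_slope_zero_right ?_
  filter_upwards [Ioo_mem_nhdsGT one_pos] with t ht
  rw [smul_eq_mul, le_inv_mul_iff₀ ht.1]
  linarith [h t ht]

end LineDeriv

section Convexity

variable {E : Type*} [NormedAddCommGroup E] [InnerProductSpace ℝ E]
  {s : Set E} {f r : E → ℝ} {x y : E}

lemma ConvexOn.map_add_smul_sub_le (hf : ConvexOn ℝ s f) (hx : x ∈ s) (hy : y ∈ s) {t : ℝ}
    (ht : t ∈ Icc (0 : ℝ) 1) : f (x + t • (y - x)) ≤ f x + t * (f y - f x) := by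
  have hseg : (1 - t) • x + t • y = x + t • (y - x) := by
    rw [smul_sub, sub_smul, one_smul]; abel
  have := hf.2 hx hy (sub_nonneg.2 ht.2) ht.1 (sub_add_cancel 1 t)
  rw [hseg, smul_eq_mul, smul_eq_mul] at this
  linarith

lemma ConvexOn.le_sub_of_hasLineDerivAt {f' : ℝ} (hf : ConvexOn ℝ s f) (hx : x ∈ s) (hy : y ∈ s)
    (hf' : HasLineDerivAt ℝ f f' x (y - x)) : f' ≤ f y - f x := by
  refine le_of_neg_le_neg (hf'.neg.le_of_forall_add_mul_le fun t ht => ?_)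
  have := hf.map_add_smul_sub_le hx hy (Ioo_subset_Icc_self ht)
  simp only [Pi.neg_apply]
  linarith

variable [CompleteSpace E] {f' : E}

lemma HasGradientAt.hasLineDerivAt (hf : HasGradientAt f f' x) (v : E) :
    HasLineDerivAt ℝ f ⟪f', v⟫ x v :=
  hf.hasFDerivAt.hasLineDerivAt v

lemma StrongConvexOn.add_inner_add_le {α : ℝ} (hf : StrongConvexOn s α f) (hx : x ∈ s)
    (hy : y ∈ s) (hf' : HasGradientAt f f' x) :
    f x + ⟪f', y - x⟫ + α / 2 * ‖y - x‖ ^ 2 ≤ f y := by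
  have hq : HasLineDerivAt ℝ (fun x => α / 2 * ‖x‖ ^ 2) (α * ⟪x, y - x⟫) x (y - x) := by
    convert ((hasStrictFDerivAt_norm_sq x).hasFDerivAt.const_mul (α / 2)).hasLineDerivAt (y - x)
      using 1
    simp only [smul_apply, coe_innerSL_apply, nsmul_eq_mul, Nat.cast_ofNat, smul_eq_mul]
    ring
  have h := (strongConvexOn_iff_convex.mp hf).le_sub_of_hasLineDerivAt hx hy
    ((hf'.hasLineDerivAt (y - x)).sub hq)
  have hsq : ‖y - x‖ ^ 2 = ‖y‖ ^ 2 - ‖x‖ ^ 2 - 2 * ⟪x, y - x⟫ := by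
    rw [norm_sub_sq_real, inner_sub_right, real_inner_self_eq_norm_sq, real_inner_comm]
    ring
  linear_combination h + α / 2 * hsq

lemma StrongConvexOn.mul_norm_sub_sq_le_inner {α : ℝ} {f'x f'y : E} (hf : StrongConvexOn s α f)
    (hx : x ∈ s) (hy : y ∈ s) (hfx : HasGradientAt f f'x x) (hfy : HasGradientAt f f'y y) :
    α * ‖x - y‖ ^ 2 ≤ ⟪f'x - f'y, x - y⟫ := by
  have hxy := hf.add_inner_add_le hx hy hfx
  have hyx := hf.add_inner_add_le hy hx hfy
  rw [norm_sub_rev, ← neg_sub x y, inner_neg_right] at hxy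
  rw [inner_sub_left]
  linarith

lemma IsMinOn.inner_add_sub_nonneg (hmin : IsMinOn (f + r) s x) (hr : ConvexOn ℝ s r)
    (hx : x ∈ s) (hy : y ∈ s) (hf' : HasGradientAt f f' x) :
    0 ≤ ⟪f', y - x⟫ + (r y - r x) := by
  suffices r x - r y ≤ ⟪f', y - x⟫ by linarith
  refine (hf'.hasLineDerivAt (y - x)).le_of_forall_add_mul_le fun t ht => ?_
  have hseg := Ioo_subset_Icc_self ht
  have hmin_t : f x + r x ≤ f (x + t • (y - x)) + r (x + t • (y - x)) :=
    isMinOn_iff.mp hmin _ (hr.1.add_smul_sub_mem hx hy hseg)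
  have := hr.map_add_smul_sub_le hx hy hseg
  linarith

lemma mul_norm_sub_le_of_isMinOn_add {g : E → ℝ} {α : ℝ} {f'x f'y g'y : E}
    (hf : StrongConvexOn s α f) (hr : ConvexOn ℝ s r) (hx : x ∈ s) (hy : y ∈ s)
    (hfx : HasGradientAt f f'x x) (hfy : HasGradientAt f f'y y) (hgy : HasGradientAt g g'y y)
    (hxmin : IsMinOn (f + r) s x) (hymin : IsMinOn (g + r) s y) :
    α * ‖x - y‖ ≤ ‖f'y - g'y‖ := by
  have hmono := hf.mul_norm_sub_sq_le_inner hx hy hfx hfy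
  have hoptx := hxmin.inner_add_sub_nonneg hr hx hy hfx
  have hopty := hymin.inner_add_sub_nonneg hr hy hx hgy
  rw [← neg_sub x y, inner_neg_right] at hoptx
  have key : α * ‖x - y‖ ^ 2 ≤ ‖f'y - g'y‖ * ‖x - y‖ :=
    calc α * ‖x - y‖ ^ 2 ≤ ⟪g'y - f'y, x - y⟫ := by rw [inner_sub_left] at hmono ⊢; linarith
      _ ≤ ‖g'y - f'y‖ * ‖x - y‖ := real_inner_le_norm _ _
      _ = ‖f'y - g'y‖ * ‖x - y‖ := by rw [norm_sub_rev]
  rcases (norm_nonneg (x - y)).eq_or_lt with h0 | hpos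
  · rw [← h0, mul_zero]; exact norm_nonneg _
  · exact le_of_mul_le_mul_right (by linarith) hpos

end Convexity

section Transport

variable {Z : Type*} [MetricSpace Z] [MeasurableSpace Z] {μ ν : Measure Z}
  [IsProbabilityMeasure μ] [IsProbabilityMeasure ν] {W : ℝ}

lemma abs_integral_sub_le_mul_of_lipschitzWith
    (hdual : ∀ g : Z → ℝ, LipschitzWith 1 g → |(∫ z, g z ∂μ) - ∫ z, g z ∂ν| ≤ W)
    {K : ℝ≥0} {g : Z → ℝ} (hg : LipschitzWith K g) :
    |(∫ z, g z ∂μ) - ∫ z, g z ∂ν| ≤ K * W := by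
  rcases eq_zero_or_pos K with rfl | hK
  · obtain ⟨z₀⟩ := nonempty_of_isProbabilityMeasure μ
    obtain ⟨c, rfl⟩ : ∃ c, g = fun _ => c :=
      ⟨g z₀, funext fun z => dist_le_zero.mp (by simpa using hg.dist_le_mul z z₀)⟩
    simp
  · have hscaled : LipschitzWith 1 (fun z => (K : ℝ)⁻¹ * g z) := by
      refine LipschitzWith.of_dist_le_mul fun z z' => ?_
      rw [Real.dist_eq, ← mul_sub, abs_mul, abs_inv, NNReal.abs_eq, NNReal.coe_one, one_mul,
        inv_mul_le_iff₀ (by exact_mod_cast hK), ← Real.dist_eq]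
      exact hg.dist_le_mul z z'
    have h := hdual _ hscaled
    rw [integral_const_mul, integral_const_mul, ← mul_sub, abs_mul, abs_inv, NNReal.abs_eq,
      inv_mul_le_iff₀ (by exact_mod_cast hK)] at h
    exact h

variable {E : Type*} [NormedAddCommGroup E] [InnerProductSpace ℝ E] [CompleteSpace E]

lemma norm_integral_sub_le_mul_of_lipschitzWith
    (hdual : ∀ g : Z → ℝ, LipschitzWith 1 g → |(∫ z, g z ∂μ) - ∫ z, g z ∂ν| ≤ W)
    {K : ℝ≥0} {F : Z → E} (hF : LipschitzWith K F) (hFμ : Integrable F μ) (hFν : Integrable F ν) :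
    ‖(∫ z, F z ∂μ) - ∫ z, F z ∂ν‖ ≤ K * W := by
  set w := (∫ z, F z ∂μ) - ∫ z, F z ∂ν
  have hW : 0 ≤ W := (abs_nonneg _).trans (hdual 0 (LipschitzWith.const' 0))
  have hw : LipschitzWith (‖w‖₊ * K) (fun z => ⟪w, F z⟫) := by
    have h := (innerSL ℝ w).lipschitz.comp hF
    rwa [show ‖innerSL ℝ w‖₊ = ‖w‖₊ from NNReal.eq (innerSL_apply_norm ℝ w)] at h
  have h := abs_integral_sub_le_mul_of_lipschitzWith hdual hw
  rw [integral_inner hFμ, integral_inner hFν, ← inner_sub_right, real_inner_self_eq_norm_sq,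
    abs_of_nonneg (sq_nonneg _), NNReal.coe_mul, coe_nnnorm, sq, mul_assoc] at h
  rcases (norm_nonneg w).eq_or_lt with h0 | hpos
  · rw [← h0]; positivity
  · exact le_of_mul_le_mul_left h hpos

end Transport

theorem calmness_full_minimization_general
    {E : Type*} [NormedAddCommGroup E] [InnerProductSpace ℝ E] [FiniteDimensional ℝ E]
    {Z : Type*} [MetricSpace Z] [MeasurableSpace Z]
    (ℓ : E → Z → ℝ) (G : E → Z → E) (β : ℝ) (hβ : 0 ≤ β)
    (hlip : ∀ (x : E) (z z' : Z), ‖G x z - G x z'‖ ≤ β * dist z z')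
    (μ ν : Measure Z) [IsProbabilityMeasure μ] [IsProbabilityMeasure ν]
    (hintGμ : ∀ x : E, Integrable (fun z => G x z) μ)
    (hintGν : ∀ x : E, Integrable (fun z => G x z) ν)
    (hfμ : ∀ x : E, HasGradientAt (fun x' => ∫ z, ℓ x' z ∂μ) (∫ z, G x z ∂μ) x)
    (hfν : ∀ x : E, HasGradientAt (fun x' => ∫ z, ℓ x' z ∂ν) (∫ z, G x z ∂ν) x)
    (r : E → ℝ) (hr : ConvexOn ℝ univ r)
    (α : ℝ) (hα : 0 < α)
    (hsc : ConvexOn ℝ univ (fun x => (∫ z, ℓ x z ∂μ) - α / 2 * ‖x‖ ^ 2))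
    (W : ℝ)
    (hdual : ∀ g : Z → ℝ, LipschitzWith 1 g → |(∫ z, g z ∂μ) - ∫ z, g z ∂ν| ≤ W)
    (yμ yν : E)
    (hyμ : ∀ y : E, (∫ z, ℓ yμ z ∂μ) + r yμ ≤ (∫ z, ℓ y z ∂μ) + r y)
    (hyν : ∀ y : E, (∫ z, ℓ yν z ∂ν) + r yν ≤ (∫ z, ℓ y z ∂ν) + r y) :
    ‖yμ - yν‖ ≤ (β / α) * W := by
  have hdist := mul_norm_sub_le_of_isMinOn_add (strongConvexOn_iff_convex.mpr hsc) hr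
    (mem_univ yμ) (mem_univ yν) (hfμ yμ) (hfμ yν) (hfν yν)
    (isMinOn_univ_iff.mpr hyμ) (isMinOn_univ_iff.mpr hyν)
  have hGlip : LipschitzWith ⟨β, hβ⟩ (G yν) :=
    LipschitzWith.of_dist_le_mul fun z z' => (dist_eq_norm _ _).trans_le (hlip yν z z')
  have hgrad_shift := norm_integral_sub_le_mul_of_lipschitzWith hdual hGlip (hintGμ yν) (hintGν yν)
  rw [div_mul_eq_mul_div, le_div_iff₀ hα, mul_comm]
  exact hdist.trans hgrad_shift

/-- **Calmness of full minimization.** If `f_μ` is `α`-strongly convex, `r` is convex,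
and `W` dominates `W₁(μ,ν)` in the dual sense, then minimizers of `f_μ + r` and `f_ν + r`
satisfy `‖y_μ − y_ν‖ ≤ (β/α)·W`. -/
theorem calmness_full_minimization
    {E : Type*} [NormedAddCommGroup E] [InnerProductSpace ℝ E] [FiniteDimensional ℝ E]
    {Z : Type*} [MetricSpace Z] [MeasurableSpace Z] [BorelSpace Z]
    (ℓ : E → Z → ℝ) (G : E → Z → E) (β : ℝ) (hβ : 0 ≤ β)
    (hgrad : ∀ (x : E) (z : Z), HasGradientAt (fun x' => ℓ x' z) (G x z) x)
    (hlip : ∀ (x : E) (z z' : Z), ‖G x z - G x z'‖ ≤ β * dist z z')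
    (μ ν : Measure Z) [IsProbabilityMeasure μ] [IsProbabilityMeasure ν]
    (hintμ : ∀ x : E, Integrable (fun z => ℓ x z) μ)
    (hintν : ∀ x : E, Integrable (fun z => ℓ x z) ν)
    (hintGμ : ∀ x : E, Integrable (fun z => G x z) μ)
    (hintGν : ∀ x : E, Integrable (fun z => G x z) ν)
    (hfμ : ∀ x : E, HasGradientAt (fun x' => ∫ z, ℓ x' z ∂μ) (∫ z, G x z ∂μ) x)
    (hfν : ∀ x : E, HasGradientAt (fun x' => ∫ z, ℓ x' z ∂ν) (∫ z, G x z ∂ν) x)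
    (r : E → ℝ) (hr : ConvexOn ℝ univ r)
    (α : ℝ) (hα : 0 < α)
    (hsc : ConvexOn ℝ univ (fun x => (∫ z, ℓ x z ∂μ) - α / 2 * ‖x‖ ^ 2))
    (W : ℝ) (hW : 0 ≤ W)
    (hdual : ∀ g : Z → ℝ, LipschitzWith 1 g → |(∫ z, g z ∂μ) - ∫ z, g z ∂ν| ≤ W)
    (yμ yν : E)
    (hyμ : ∀ y : E, (∫ z, ℓ yμ z ∂μ) + r yμ ≤ (∫ z, ℓ y z ∂μ) + r y)
    (hyν : ∀ y : E, (∫ z, ℓ yν z ∂ν) + r yν ≤ (∫ z, ℓ y z ∂ν) + r y) :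
    ‖yμ - yν‖ ≤ (β / α) * W :=
  calmness_full_minimization_general ℓ G β hβ hlip μ ν hintGμ hintGν hfμ hfν r hr α hα hsc W hdual
    yμ yν hyμ hyν
end

section
/- (Contraction of repeated minimization toward equilibrium) Suppose f_{x̄} is α-strongly convex for some α > 0. Then for every x ∈ E and every minimizer x⁺ over E of y ↦ f_x(y) + r(y), one has ‖x⁺ − x̄‖ ≤ (γβ/α)·‖x − x̄‖. In particular, in the regime ρ := γβ/α < 1 the repeated minimization update is a contraction toward the equilibrium point x̄. -/
open MeasureTheory Set
open scoped NNReal RealInnerProductSpace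

/-!
Write `u = x⁺ - x̄`. Strong convexity makes `∇f_{x̄}` strongly monotone, so
`α‖u‖² ≤ ⟪∇f_{x̄}(x⁺) - ∇f_{x̄}(x̄), u⟫`. The first-order optimality conditions of the two
minimizations give `⟪∇f_x(x⁺) - ∇f_{x̄}(x̄), u⟫ ≤ 0`, hence `α‖u‖² ≤ ⟪∇f_{x̄}(x⁺) - ∇f_x(x⁺), u⟫`.
The right side is the difference of the integrals of the `β‖u‖`-Lipschitz function
`z ↦ ⟪u, ∇ℓ(x⁺, z)⟫` against `D(x̄)` and `D(x)`, which the Kantorovich–Rubinstein bound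
controls by `β‖u‖ · γ‖x - x̄‖`.
-/

section KantorovichRubinstein

variable {Z : Type*} [PseudoMetricSpace Z] [MeasurableSpace Z] {μ ν : Measure Z} {C : ℝ}

theorem abs_integral_sub_integral_le_of_lipschitzWith
    (hC : ∀ g : Z → ℝ, LipschitzWith 1 g → |∫ z, g z ∂μ - ∫ z, g z ∂ν| ≤ C)
    {K : ℝ≥0} {g : Z → ℝ} (hg : LipschitzWith K g) :
    |∫ z, g z ∂μ - ∫ z, g z ∂ν| ≤ K * C := by
  set δ := |∫ z, g z ∂μ - ∫ z, g z ∂ν|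
  have hscaled : ∀ t : ℝ, 0 ≤ t → t * K ≤ 1 → t * δ ≤ C := by
    intro t ht htK
    have hLip : LipschitzWith 1 (fun z => t * g z) :=
      ((lipschitzWith_smul t).comp hg).weaken <| by
        rw [← NNReal.coe_le_coe]; simpa [abs_of_nonneg ht] using htK
    simpa [δ, integral_const_mul, ← mul_sub, abs_mul, abs_of_nonneg ht] using hC _ hLip
  rcases eq_or_ne K 0 with rfl | hK
  · -- a `0`-Lipschitz `g` may be rescaled arbitrarily, which forces `δ = 0`
    have hC₀ : 0 ≤ C := by simpa using hscaled 0 le_rfl (by simp)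
    by_contra! hδ
    have hδ₀ : 0 < δ := by simpa using hδ
    have := hscaled ((C + 1) / δ) (by positivity) (by simp)
    rw [div_mul_cancel₀ _ hδ₀.ne'] at this
    linarith
  · have hK₀ : (0 : ℝ) < K := by positivity
    have := hscaled (K : ℝ)⁻¹ (by positivity) (inv_mul_cancel₀ hK₀.ne').le
    rwa [inv_mul_le_iff₀ hK₀] at this

variable {E : Type*} [NormedAddCommGroup E] [InnerProductSpace ℝ E] [CompleteSpace E]

theorem inner_integral_sub_integral_le_of_lipschitzWith
    (hC : ∀ g : Z → ℝ, LipschitzWith 1 g → |∫ z, g z ∂μ - ∫ z, g z ∂ν| ≤ C)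
    {K : ℝ≥0} {F : Z → E} (hF : LipschitzWith K F) (hμ : Integrable F μ) (hν : Integrable F ν)
    (u : E) : ⟪∫ z, F z ∂μ - ∫ z, F z ∂ν, u⟫ ≤ ‖u‖ * K * C := by
  have hLip : LipschitzWith (‖u‖₊ * K) (fun z => ⟪u, F z⟫) := by
    have h := (innerSL ℝ u).lipschitz.comp hF
    rwa [show ‖innerSL ℝ u‖₊ = ‖u‖₊ from NNReal.eq (innerSL_apply_norm ℝ u)] at h
  calc ⟪∫ z, F z ∂μ - ∫ z, F z ∂ν, u⟫ = ∫ z, ⟪u, F z⟫ ∂μ - ∫ z, ⟪u, F z⟫ ∂ν := by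
        rw [real_inner_comm, inner_sub_right, integral_inner hμ, integral_inner hν]
    _ ≤ ‖u‖ * K * C :=
        (le_abs_self _).trans (abs_integral_sub_integral_le_of_lipschitzWith hC hLip)

end KantorovichRubinstein

theorem HasDerivAt.nonneg_of_isMinOn_Icc {ψ : ℝ → ℝ} {ψ' a b : ℝ} (h : HasDerivAt ψ ψ' a)
    (hab : a < b) (hmin : IsMinOn ψ (Icc a b) a) : 0 ≤ ψ' := by
  have hcone : b - a ∈ posTangentConeAt (Icc a b) a :=
    mem_posTangentConeAt_of_segment_subset (by simp [segment_eq_Icc hab.le])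
  have := (IsMinOn.localize hmin).hasFDerivWithinAt_nonneg h.hasFDerivAt.hasFDerivWithinAt hcone
  simp only [ContinuousLinearMap.toSpanSingleton_apply, smul_eq_mul] at this
  exact (mul_nonneg_iff_of_pos_left (sub_pos.2 hab)).1 this

section Gradient

variable {E : Type*} [NormedAddCommGroup E] [InnerProductSpace ℝ E] [CompleteSpace E]
  {g r : E → ℝ} {G G' p q : E}

theorem HasGradientAt.hasDerivAt_comp_lineMap (h : HasGradientAt g G p) (y : E) :
    HasDerivAt (fun t : ℝ => g (AffineMap.lineMap p y t)) ⟪G, y - p⟫ 0 :=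
  h.hasFDerivAt.comp_hasDerivAt_of_eq (0 : ℝ) AffineMap.hasDerivAt_lineMap
    (AffineMap.lineMap_apply_zero p y).symm

theorem ConvexOn.inner_gradient_le_sub (hg : ConvexOn ℝ univ g) (h : HasGradientAt g G p)
    (y : E) : ⟪G, y - p⟫ ≤ g y - g p := by
  have := (hg.comp_affineMap (AffineMap.lineMap p y)).le_slope_of_hasDerivAt (mem_univ 0)
    (mem_univ 1) one_pos (h.hasDerivAt_comp_lineMap y)
  simpa [slope] using this

theorem ConvexOn.inner_gradient_sub_nonneg (hg : ConvexOn ℝ univ g) (hp : HasGradientAt g G p)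
    (hq : HasGradientAt g G' q) : 0 ≤ ⟪G - G', p - q⟫ := by
  have h₁ := hg.inner_gradient_le_sub hp q
  have h₂ := hg.inner_gradient_le_sub hq p
  rw [← neg_sub p q, inner_neg_right] at h₁
  rw [inner_sub_left]
  linarith

theorem HasGradientAt.sub_half_mul_norm_sq (h : HasGradientAt g G p) (m : ℝ) :
    HasGradientAt (fun y => g y - m / 2 * ‖y‖ ^ 2) (G - m • p) p := by
  rw [hasGradientAt_iff_hasFDerivAt] at h ⊢
  refine (h.sub ((hasStrictFDerivAt_norm_sq p).hasFDerivAt.const_mul (m / 2))).congr_fderiv ?_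
  ext v
  simp only [sub_apply, smul_apply,
    InnerProductSpace.toDual_apply_apply, coe_innerSL_apply, inner_sub_left, real_inner_smul_left,
    nsmul_eq_mul, Nat.cast_ofNat, smul_eq_mul]
  ring

theorem StrongConvexOn.mul_norm_sq_le_inner_gradient_sub {m : ℝ} (hg : StrongConvexOn univ m g)
    (hp : HasGradientAt g G p) (hq : HasGradientAt g G' q) :
    m * ‖p - q‖ ^ 2 ≤ ⟪G - G', p - q⟫ := by
  have := (strongConvexOn_iff_convex.1 hg).inner_gradient_sub_nonneg
    (hp.sub_half_mul_norm_sq m) (hq.sub_half_mul_norm_sq m)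
  rw [show G - m • p - (G' - m • q) = (G - G') - m • (p - q) by module, inner_sub_left,
    real_inner_smul_left, real_inner_self_eq_norm_sq] at this
  linarith

theorem IsMinOn.sub_le_inner_gradient (hmin : IsMinOn (g + r) univ p) (hr : ConvexOn ℝ univ r)
    (hg : HasGradientAt g G p) (y : E) :
    r p - r y ≤ ⟪G, y - p⟫ := by
  -- Along the segment from `p` to `y`, convexity replaces `r` by its chord, which is affine.
  set ψ : ℝ → ℝ := fun t => g (AffineMap.lineMap p y t) + t * (r y - r p)
  have hψ : HasDerivAt ψ (⟪G, y - p⟫ + (r y - r p)) 0 :=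
    (hg.hasDerivAt_comp_lineMap y).add (hasDerivAt_mul_const (r y - r p))
  have hmin_ψ : IsMinOn ψ (Icc 0 1) 0 := by
    intro t ht
    have hchord := hr.2 (mem_univ p) (mem_univ y) (sub_nonneg.2 ht.2) ht.1 (sub_add_cancel 1 t)
    have := isMinOn_univ_iff.1 hmin ((1 - t) • p + t • y)
    rw [Pi.add_apply, Pi.add_apply] at this
    show ψ 0 ≤ ψ t
    simp only [ψ, AffineMap.lineMap_apply_zero, zero_mul, add_zero]
    rw [AffineMap.lineMap_apply_module]
    simp only [smul_eq_mul] at hchord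
    linarith
  linarith [hψ.nonneg_of_isMinOn_Icc one_pos hmin_ψ]

theorem IsMinOn.inner_gradient_sub_nonpos {g' : E → ℝ} (hp : IsMinOn (g + r) univ p)
    (hq : IsMinOn (g' + r) univ q) (hr : ConvexOn ℝ univ r) (hg : HasGradientAt g G p)
    (hg' : HasGradientAt g' G' q) : ⟪G - G', p - q⟫ ≤ 0 := by
  have h₁ := hp.sub_le_inner_gradient hr hg q
  have h₂ := hq.sub_le_inner_gradient hr hg' p
  rw [← neg_sub p q, inner_neg_right] at h₁
  rw [inner_sub_left]
  linarith

end Gradient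

theorem repeated_minimization_contraction_general
    {E : Type*} [NormedAddCommGroup E] [InnerProductSpace ℝ E] [FiniteDimensional ℝ E]
    {Z : Type*} [MetricSpace Z] [MeasurableSpace Z]
    (G : E → Z → E) (β γ : ℝ) (hβ : 0 ≤ β) (hγ : 0 ≤ γ)
    (hlip : ∀ (x : E) (z z' : Z), ‖G x z - G x z'‖ ≤ β * dist z z')
    (D : E → Measure Z)
    (hintG : ∀ x y : E, Integrable (fun z => G y z) (D x))
    (f : E → E → ℝ) (Gf : E → E → E)
    (hGfdef : ∀ x y : E, Gf x y = ∫ z, G y z ∂(D x))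
    (hfgrad : ∀ x y : E, HasGradientAt (f x) (Gf x y) y)
    (hDlip : ∀ x y : E, ∀ g : Z → ℝ, LipschitzWith 1 g →
      |(∫ z, g z ∂(D x)) - ∫ z, g z ∂(D y)| ≤ γ * ‖x - y‖)
    (r : E → ℝ) (hr : ConvexOn ℝ univ r)
    (xbar : E) (hxbar : ∀ y : E, f xbar xbar + r xbar ≤ f xbar y + r y)
    (α : ℝ) (hα : 0 < α)
    (hsc : ConvexOn ℝ univ (fun y => f xbar y - α / 2 * ‖y‖ ^ 2))
    (x xp : E) (hxp : ∀ y : E, f x xp + r xp ≤ f x y + r y) :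
    ‖xp - xbar‖ ≤ (γ * β / α) * ‖x - xbar‖ := by
  set u := xp - xbar
  have hstrong : α * ‖u‖ ^ 2 ≤ ⟪Gf xbar xp - Gf xbar xbar, u⟫ :=
    (strongConvexOn_iff_convex.2 hsc).mul_norm_sq_le_inner_gradient_sub (hfgrad xbar xp)
      (hfgrad xbar xbar)
  have hopt : ⟪Gf x xp - Gf xbar xbar, u⟫ ≤ 0 :=
    (isMinOn_univ_iff.2 hxp).inner_gradient_sub_nonpos (isMinOn_univ_iff.2 hxbar) hr
      (hfgrad x xp) (hfgrad xbar xbar)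
  have hshift : ⟪Gf xbar xp - Gf x xp, u⟫ ≤ ‖u‖ * β * (γ * ‖x - xbar‖) := by
    have hGlip : LipschitzWith β.toNNReal (G xp) :=
      LipschitzWith.of_dist_le' fun z z' => by simpa [dist_eq_norm] using hlip xp z z'
    have := inner_integral_sub_integral_le_of_lipschitzWith (hDlip xbar x) hGlip
      (hintG xbar xp) (hintG x xp) u
    rwa [Real.coe_toNNReal β hβ, norm_sub_rev xbar x, ← hGfdef, ← hGfdef] at this
  have hsplit : ⟪Gf xbar xp - Gf xbar xbar, u⟫
      = ⟪Gf xbar xp - Gf x xp, u⟫ + ⟪Gf x xp - Gf xbar xbar, u⟫ := by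
    rw [← inner_add_left, sub_add_sub_cancel]
  have hkey : ‖u‖ * (α * ‖u‖) ≤ ‖u‖ * (γ * β * ‖x - xbar‖) := by linarith
  rcases (norm_nonneg u).eq_or_lt with hu | hu
  · rw [← hu]
    positivity
  · rw [div_mul_eq_mul_div, le_div_iff₀ hα]
    linarith [le_of_mul_le_mul_left hkey hu]

/-- **Contraction of repeated minimization toward equilibrium.** If `f_{xbar}` is `α`-strongly
convex, then any minimizer `xp` of `f_x + r` satisfies `‖xp − xbar‖ ≤ (γβ/α)‖x − xbar‖`. -/
theorem repeated_minimization_contraction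
    {E : Type*} [NormedAddCommGroup E] [InnerProductSpace ℝ E] [FiniteDimensional ℝ E]
    {Z : Type*} [MetricSpace Z] [MeasurableSpace Z] [BorelSpace Z]
    (ℓ : E → Z → ℝ) (G : E → Z → E) (β γ : ℝ) (hβ : 0 ≤ β) (hγ : 0 ≤ γ)
    (hgrad : ∀ (x : E) (z : Z), HasGradientAt (fun x' => ℓ x' z) (G x z) x)
    (hlip : ∀ (x : E) (z z' : Z), ‖G x z - G x z'‖ ≤ β * dist z z')
    (D : E → Measure Z) (hD : ∀ x : E, IsProbabilityMeasure (D x))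
    (hint : ∀ x y : E, Integrable (fun z => ℓ y z) (D x))
    (hintG : ∀ x y : E, Integrable (fun z => G y z) (D x))
    (f : E → E → ℝ) (Gf : E → E → E)
    (hfdef : ∀ x y : E, f x y = ∫ z, ℓ y z ∂(D x))
    (hGfdef : ∀ x y : E, Gf x y = ∫ z, G y z ∂(D x))
    (hfgrad : ∀ x y : E, HasGradientAt (f x) (Gf x y) y)
    (hDlip : ∀ x y : E, ∀ g : Z → ℝ, LipschitzWith 1 g →
      |(∫ z, g z ∂(D x)) - ∫ z, g z ∂(D y)| ≤ γ * ‖x - y‖)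
    (r : E → ℝ) (hr : ConvexOn ℝ univ r)
    (xbar : E) (hxbar : ∀ y : E, f xbar xbar + r xbar ≤ f xbar y + r y)
    (α : ℝ) (hα : 0 < α)
    (hsc : ConvexOn ℝ univ (fun y => f xbar y - α / 2 * ‖y‖ ^ 2))
    (x xp : E) (hxp : ∀ y : E, f x xp + r xp ≤ f x y + r y) :
    ‖xp - xbar‖ ≤ (γ * β / α) * ‖x - xbar‖ :=
  repeated_minimization_contraction_general G β γ hβ hγ hlip D hintG f Gf hGfdef hfgrad hDlip r hr
    xbar hxbar α hα hsc x xp hxp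
end
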